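/- arXiv:2105.04155 — 2 statements merged into one kernel-verified Lean document; each statement's English description precedes it below -/
import Mathlib

section
/- Let k be a field of characteristic ≠ 2, let n ≥ 1, and let B be an (n+1) × (2n+2) matrix over k such that every set of n+1 columns of B is linearly independent. Suppose x ∈ k^{2n+2} is nonzero and satisfies Σ_i B_{j,i} x_i² = 0 for all j = 0, …, n. Then x has at least n+2 nonzero coordinates. -/
open Classical in
/-- If every `n+1` columns of the `(n+1) × (2n+2)` matrix `B` are linearly
independent and a nonzero `x` satisfies the diagonal quadric equations
`∑ i, B j i * x i ^ 2 = 0` for all `j`, then `x` has at least `n+2` nonzero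
coordinates. -/
theorem stmt_4 (k : Type*) [Field k] (hk2 : (2 : k) ≠ 0) (n : ℕ) (hn : 1 ≤ n)
    (B : Matrix (Fin (n + 1)) (Fin (2 * n + 2)) k)
    (hB : ∀ cols : Fin (n + 1) → Fin (2 * n + 2), Function.Injective cols →
      LinearIndependent k (fun c : Fin (n + 1) => fun j : Fin (n + 1) => B j (cols c)))
    (x : Fin (2 * n + 2) → k) (hx : x ≠ 0)
    (hquad : ∀ j : Fin (n + 1), ∑ i, B j i * x i ^ 2 = 0) :
    n + 2 ≤ (Finset.univ.filter fun i => x i ≠ 0).card := by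
  by_contra hcon
  push_neg at hcon
  set S := Finset.univ.filter fun i => x i ≠ 0 with hS
  have hle : S.card ≤ n + 1 := Nat.lt_succ_iff.mp hcon
  have hcard : n + 1 ≤ Fintype.card (Fin (2 * n + 2)) := by
    simp [Fintype.card_fin]; omega
  obtain ⟨T, hST, hTcard⟩ := Finset.exists_superset_card_eq hle hcard
  set cols : Fin (n + 1) → Fin (2 * n + 2) :=
    fun c => (T.orderIsoOfFin hTcard c : Fin (2 * n + 2)) with hcols
  have hinj : Function.Injective cols :=
    Subtype.coe_injective.comp (T.orderIsoOfFin hTcard).injective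
  have hLI := hB cols hinj
  rw [Fintype.linearIndependent_iff] at hLI
  have hzero : ∀ c, x (cols c) ^ 2 = 0 := by
    apply hLI
    funext j
    have h1 : ∑ c : Fin (n + 1), x (cols c) ^ 2 * B j (cols c)
        = ∑ i ∈ T, x i ^ 2 * B j i := by
      rw [← Finset.sum_coe_sort T (fun i => x i ^ 2 * B j i)]
      exact Fintype.sum_equiv (T.orderIsoOfFin hTcard).toEquiv _ _ (fun c => rfl)
    have h2 : ∑ i ∈ T, x i ^ 2 * B j i = ∑ i, x i ^ 2 * B j i := by
      apply Finset.sum_subset (Finset.subset_univ T)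
      intro i _ hiT
      have : x i = 0 := by
        by_contra hxi
        exact hiT (hST (by simp [hS, hxi]))
      simp [this]
    have h3 : ∑ i, x i ^ 2 * B j i = 0 := by
      rw [← hquad j]; exact Finset.sum_congr rfl fun i _ => mul_comm _ _
    have := h1.trans (h2.trans h3)
    simpa [Finset.sum_apply, smul_eq_mul] using this
  -- But x ≠ 0 means some i with x i ≠ 0, i ∈ S ⊆ T = range of cols
  obtain ⟨i, hxi⟩ := Function.ne_iff.mp hx
  simp only [Pi.zero_apply] at hxi
  have hiT : i ∈ T := hST (by simp [hS, hxi])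
  obtain ⟨c, hc⟩ := (T.orderIsoOfFin hTcard).surjective ⟨i, hiT⟩
  have : x (cols c) = x i := by rw [hcols]; simp [hc]
  have := hzero c
  rw [‹x (cols c) = x i›] at this
  exact hxi (pow_eq_zero_iff (n := 2) (by norm_num) |>.mp this)
end

section
/- Let k be a field of characteristic ≠ 2, n ≥ 1, and let B be an (n+1) × (2n+2) matrix over k all of whose (n+1) × (n+1) minors are nonzero. For any nonzero x ∈ k^{2n+2} satisfying Σ_i B_{j,i} x_i² = 0 for all j, the n+1 vectors v_j := (B_{j,i} x_i)_{i=0,…,2n+1} ∈ k^{2n+2}, for j = 0, …, n, are linearly independent. -/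
open Matrix

lemma aux_cols_stmt5 {m N : ℕ} (s : Finset (Fin N)) (h : s.card = m) :
    ∃ cols : Fin m → Fin N, Function.Injective cols ∧
      Finset.image cols Finset.univ = s := by
  let e : Fin m ≃ s := (finCongr h.symm).trans s.equivFin.symm
  refine ⟨fun t => (e t : Fin N), Subtype.coe_injective.comp e.injective, ?_⟩
  ext i
  simp only [Finset.mem_image, Finset.mem_univ, true_and]
  constructor
  · rintro ⟨t, rfl⟩; exact (e t).2
  · intro hi; exact ⟨e.symm ⟨i, hi⟩, by simp⟩

/-- Jacobian criterion computation: if all maximal minors of the `(n+1) × (2n+2)`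
matrix `B` are nonzero and the nonzero vector `x` lies on all the diagonal quadrics
`∑ i, B j i * x i ^ 2 = 0`, then the gradient vectors `v j = (B j i * x i)_i` are
linearly independent. -/
theorem stmt_5 (k : Type*) [Field k] (hk2 : (2 : k) ≠ 0) (n : ℕ) (hn : 1 ≤ n)
    (B : Matrix (Fin (n + 1)) (Fin (2 * n + 2)) k)
    (hB : ∀ cols : Fin (n + 1) → Fin (2 * n + 2), Function.Injective cols →
      (B.submatrix id cols).det ≠ 0)
    (x : Fin (2 * n + 2) → k) (hx : x ≠ 0)
    (hquad : ∀ j : Fin (n + 1), ∑ i, B j i * x i ^ 2 = 0) :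
    LinearIndependent k (fun j : Fin (n + 1) => fun i : Fin (2 * n + 2) => B j i * x i) := by
  rw [Fintype.linearIndependent_iff]
  intro g hg
  by_contra hgne
  push_neg at hgne
  obtain ⟨j0, hj0⟩ := hgne
  set w : Fin (2 * n + 2) → k := fun i => ∑ j, g j * B j i with hwdef
  have hwx : ∀ i, w i * x i = 0 := by
    intro i
    have h1 := congrFun hg i
    simp only [Finset.sum_apply, Pi.smul_apply, smul_eq_mul, Pi.zero_apply] at h1
    calc w i * x i = ∑ j, g j * B j i * x i := by rw [hwdef]; rw [Finset.sum_mul]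
    _ = ∑ j, g j * (B j i * x i) := by simp [mul_assoc]
    _ = 0 := h1
  -- support of x has at least n+2 elements
  classical
  set N : Finset (Fin (2 * n + 2)) := Finset.univ.filter (fun i => x i ≠ 0) with hN
  set W : Finset (Fin (2 * n + 2)) := Finset.univ.filter (fun i => w i = 0) with hW
  have hNcard : n + 2 ≤ N.card := by
    by_contra hc
    push_neg at hc
    have hle : N.card ≤ n + 1 := by omega
    obtain ⟨s, hNs, hscard⟩ := Finset.exists_superset_card_eq hle
      (by simp [Fintype.card_fin]; omega)
    obtain ⟨cols, hinj, himg⟩ := aux_cols_stmt5 s hscard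
    have hmv : (B.submatrix id cols) *ᵥ (fun t => x (cols t) ^ 2) = 0 := by
      funext j
      have hsum : ∑ t, B j (cols t) * x (cols t) ^ 2 = ∑ i ∈ s, B j i * x i ^ 2 := by
        rw [← himg, Finset.sum_image (fun a _ b _ hab => hinj hab)]
      have hfull : ∑ i ∈ s, B j i * x i ^ 2 = ∑ i, B j i * x i ^ 2 := by
        refine Finset.sum_subset (Finset.subset_univ s) ?_
        intro i _ his
        have : x i = 0 := by
          by_contra hxi
          exact his (hNs (by simp [hN, hxi]))
        simp [this]
      simp only [Matrix.mulVec, dotProduct, Matrix.submatrix_apply, id_eq,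
        Pi.zero_apply]
      rw [hsum, hfull, hquad j]
    have hy := Matrix.eq_zero_of_mulVec_eq_zero (hB cols hinj) hmv
    apply hx
    funext i
    show x i = 0
    by_contra hxi
    have hiN : i ∈ N := by simp [hN, hxi]
    have his : i ∈ s := hNs hiN
    rw [← himg] at his
    obtain ⟨t, _, rfl⟩ := Finset.mem_image.mp his
    have := congrFun hy t
    simp only [Pi.zero_apply] at this
    exact hxi (pow_eq_zero_iff (n := 2) (by norm_num) |>.mp this)
  have hWcard : W.card ≤ n := by
    by_contra hc
    push_neg at hc
    obtain ⟨s, hsW, hscard⟩ := Finset.exists_subset_card_eq hc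
    obtain ⟨cols, hinj, himg⟩ := aux_cols_stmt5 s hscard
    have hvm : Matrix.vecMul g (B.submatrix id cols) = 0 := by
      funext t
      have hts : cols t ∈ s := by
        rw [← himg]; exact Finset.mem_image_of_mem cols (Finset.mem_univ t)
      have hwt : w (cols t) = 0 := by
        have := hsW hts
        simpa [hW] using this
      simpa [Matrix.vecMul, dotProduct, hwdef] using hwt
    have := Matrix.eq_zero_of_vecMul_eq_zero (hB cols hinj) hvm
    exact hj0 (congrFun this j0)
  have hcover : Finset.univ ⊆ Nᶜ ∪ W := by
    intro i _
    rcases mul_eq_zero.mp (hwx i) with h | h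
    · exact Finset.mem_union_right _ (by simp [hW, h])
    · exact Finset.mem_union_left _ (by simp [hN, h])
  have hcard := Finset.card_le_card hcover
  rw [Finset.card_univ, Fintype.card_fin] at hcard
  have h1 : (Nᶜ ∪ W).card ≤ Nᶜ.card + W.card := Finset.card_union_le _ _
  have h2 : Nᶜ.card = 2 * n + 2 - N.card := by
    rw [Finset.card_compl, Fintype.card_fin]
  omega
end
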